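/- arXiv:1302.3636 — 2 statements merged into one kernel-verified Lean document; each statement's English description precedes it below -/
import Mathlib

section
/- Define lex(S) = ∑_{ℓ=1}^k ∑_{j=i_{ℓ−1}+1}^{i_ℓ−1} C(n−j, k−ℓ) for a k-set S = {i₁ < ⋯ < i_k} ⊆ {1,…,n} (with i₀ = 0). If S ⪰ T in the shift order, then lex(S) ≤ lex(T). -/
/-- Shift order: `shiftGE S T` means `S ⪰ T`, i.e. the ℓ-th smallest element of `S`
is at most the ℓ-th smallest element of `T`, for every ℓ. -/
def shiftGE (S T : Finset ℕ) : Prop :=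
  List.Forall₂ (· ≤ ·) (Finset.sort S (· ≤ ·)) (Finset.sort T (· ≤ ·))

/-- The `(t+1)`-st smallest element of `S` (0-indexed). -/
def nthSmall (S : Finset ℕ) (t : ℕ) : ℕ := (Finset.sort S (· ≤ ·)).getD t 0

/-- The lexicographic rank of a `k`-set `S ⊆ {1,…,n}`. -/
def lexRank (n k : ℕ) (S : Finset ℕ) : ℕ :=
  ∑ ℓ ∈ Finset.range k,
    ∑ j ∈ Finset.Ioo (if ℓ = 0 then 0 else nthSmall S (ℓ - 1)) (nthSmall S ℓ),
      (n - j).choose (k - (ℓ + 1))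

/-
Reading `S = {i₁ < ⋯ < i_k}` in the combinatorial number system, `lexRank n k S` counts the
`k`-subsets of `{1,…,n}` that precede `S` lexicographically, and the hockey-stick identity in
each gap `i_{ℓ-1} < j < i_ℓ` gives the closed form
`lexRank n k S + ∑_ℓ C(n - i_ℓ, k - ℓ) + 1 = C(n, k)`.
Each term `C(n - i_ℓ, k - ℓ)` is antitone in `i_ℓ`, and `S ⪰ T` compares the `i_ℓ` termwise.
-/

open Finset

/-- The hockey-stick identity, in subtraction-free form. -/
theorem sum_Ioo_choose_add_choose (n r : ℕ) {a b : ℕ} (hab : a < b) (hb : b ≤ n + 1) :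
    ∑ j ∈ Ioo a b, (n - j).choose r + (n + 1 - b).choose (r + 1) = (n - a).choose (r + 1) := by
  induction b, hab using Nat.le_induction with
  | base => simp [show n + 1 - (a + 1) = n - a by omega]
  | succ b hab ih =>
    rw [← Ico_add_one_left_eq_Ioo, sum_Ico_succ_top (by omega : a + 1 ≤ b),
      Ico_add_one_left_eq_Ioo, add_assoc, show n + 1 - (b + 1) = n - b by omega, ← Nat.choose_succ_succ',
      show n - b + 1 = n + 1 - b by omega]
    exact ih (by omega)

theorem List.Forall₂.getD {α : Type*} {R : α → α → Prop} {l₁ l₂ : List α}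
    (h : List.Forall₂ R l₁ l₂) {d : α} (hd : R d d) (i : ℕ) : R (l₁.getD i d) (l₂.getD i d) := by
  induction h generalizing i with
  | nil => simpa using hd
  | cons hab _ ih =>
    cases i with
    | zero => simpa using hab
    | succ i => simpa using ih i

theorem shiftGE.nthSmall_le {S T : Finset ℕ} (h : shiftGE S T) (i : ℕ) :
    nthSmall S i ≤ nthSmall T i :=
  h.getD le_rfl i

theorem nthSmall_eq_getElem (S : Finset ℕ) {i : ℕ} (hi : i < S.card) :
    nthSmall S i = (S.sort (· ≤ ·))[i]'(by rwa [length_sort]) :=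
  List.getD_eq_getElem _ _ _

theorem nthSmall_mem {S : Finset ℕ} {i : ℕ} (hi : i < S.card) : nthSmall S i ∈ S := by
  rw [nthSmall_eq_getElem S hi, ← mem_sort (· ≤ ·)]
  exact List.getElem_mem _

theorem nthSmall_lt_nthSmall_succ {S : Finset ℕ} {i : ℕ} (hi : i + 1 < S.card) :
    nthSmall S i < nthSmall S (i + 1) := by
  rw [nthSmall_eq_getElem S (by omega), nthSmall_eq_getElem S hi,
    S.sortedLT_sort.getElem_lt_getElem_iff]
  omega

theorem lexRank_add_sum_choose_add_one {n k : ℕ} {S : Finset ℕ} (hS : S ⊆ Icc 1 n)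
    (hSc : S.card = k) :
    lexRank n k S + ∑ ℓ ∈ range k, (n - nthSmall S ℓ).choose (k - ℓ) + 1 = n.choose k := by
  set f : ℕ → ℕ := fun ℓ => (n - if ℓ = 0 then 0 else nthSmall S (ℓ - 1)).choose (k - ℓ)
  have hf0 : f 0 = n.choose k := by simp [f]
  have hfk : f k = 1 := by simp [f]
  -- hockey stick over the `ℓ`-th gap, then Pascal's rule at `C(n + 1 - i_ℓ, k - ℓ)`
  have block : ∀ ℓ < k, ∑ j ∈ Ioo (if ℓ = 0 then 0 else nthSmall S (ℓ - 1)) (nthSmall S ℓ),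
      (n - j).choose (k - (ℓ + 1)) + (n - nthSmall S ℓ).choose (k - ℓ) + f (ℓ + 1) = f ℓ := by
    intro ℓ hℓ
    have hi := mem_Icc.mp (hS (nthSmall_mem (hSc ▸ hℓ)))
    have hprev : (if ℓ = 0 then 0 else nthSmall S (ℓ - 1)) < nthSmall S ℓ := by
      rcases ℓ with _ | ℓ
      · exact hi.1
      · simpa using nthSmall_lt_nthSmall_succ (S := S) (i := ℓ) (by omega)
    have hr : k - ℓ = k - (ℓ + 1) + 1 := by omega
    have hockey := sum_Ioo_choose_add_choose n (k - (ℓ + 1)) hprev (by omega)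
    rw [show n + 1 - nthSmall S ℓ = n - nthSmall S ℓ + 1 by omega, Nat.choose_succ_succ',
      ← hr] at hockey
    simp only [f, Nat.add_sub_cancel, Nat.add_one_ne_zero, if_false]
    omega
  have telescope : ∑ ℓ ∈ range k, f ℓ + f k = ∑ ℓ ∈ range k, f (ℓ + 1) + f 0 := by
    rw [← sum_range_succ, sum_range_succ']
  have summed : lexRank n k S + ∑ ℓ ∈ range k, (n - nthSmall S ℓ).choose (k - ℓ)
      + ∑ ℓ ∈ range k, f (ℓ + 1) = ∑ ℓ ∈ range k, f ℓ := by
    rw [lexRank, ← sum_add_distrib, ← sum_add_distrib]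
    exact sum_congr rfl fun ℓ hℓ => block ℓ (mem_range.mp hℓ)
  omega

theorem stmt_8 (n k : ℕ) (S T : Finset ℕ)
    (hS : S ⊆ Finset.Icc 1 n) (hT : T ⊆ Finset.Icc 1 n)
    (hSc : S.card = k) (hTc : T.card = k) (hST : shiftGE S T) :
    lexRank n k S ≤ lexRank n k T := by
  have hS' := lexRank_add_sum_choose_add_one hS hSc
  have hT' := lexRank_add_sum_choose_add_one hT hTc
  have tails : ∑ ℓ ∈ range k, (n - nthSmall T ℓ).choose (k - ℓ)
      ≤ ∑ ℓ ∈ range k, (n - nthSmall S ℓ).choose (k - ℓ) :=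
    sum_le_sum fun ℓ _ => Nat.choose_le_choose _ (Nat.sub_le_sub_left (hST.nthSmall_le ℓ) n)
  omega
end

section
/- Let g(m,k) denote the minimum, over all y ∈ ℝᵐ with ∑ yᵢ ≥ 0, of the number of nonnegative k-sums of y. Fix n, k, t with t ≤ C(n−1,k−1) and a k-set S ⊆ {1,…,n} with 1 ∈ S and L_k(S) + g(n−k, k) ≥ t. Then every x ∈ ℝⁿ with x₁ ≥ ⋯ ≥ xₙ, ∑ᵢ xᵢ ≥ 0, and s_k(x) < t satisfies ∑_{i∈S} xᵢ < 0. -/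
/-- `g(m,k)`: the minimum number of nonnegative `k`-sums over all vectors in ℝᵐ
with nonnegative total sum. -/
noncomputable def gMMS (m k : ℕ) : ℕ :=
  sInf {c : ℕ | ∃ y : ℕ → ℝ, 0 ≤ ∑ i ∈ Finset.Icc 1 m, y i ∧
    c = Nat.card {S : Finset ℕ // S ⊆ Finset.Icc 1 m ∧ S.card = k ∧ 0 ≤ ∑ i ∈ S, y i}}

/-!
Suppose `∑_{i∈S} xᵢ ≥ 0`. Since `x` is nonincreasing, every `k`-set `T ⪰ S` has a nonnegative
sum, and all of them contain `1`. If `x₂ + ⋯ + x_{n-k+1}` were negative, then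
`x₁ + x_{n-k+2} + ⋯ + xₙ > 0`, and this is the smallest sum of a `k`-set containing `1`, so all
`C(n-1,k-1) ≥ t` of those would be nonnegative. Hence that middle block has nonnegative sum and,
shifted to `{1,…,n-k}`, contributes at least `g(n-k,k)` nonnegative `k`-sums avoiding `1`.
Together this gives at least `L_k(S) + g(n-k,k) ≥ t` nonnegative `k`-sums.
-/

open Finset

lemma List.Forall₂.sum_map_le_sum_map_of_antitoneOn {α β : Type*} [Preorder α]
    [AddCommMonoid β] [PartialOrder β] [IsOrderedAddMonoid β] {f : α → β} {s : Set α}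
    (hf : AntitoneOn f s) {l₁ l₂ : List α} (h : List.Forall₂ (· ≤ ·) l₁ l₂)
    (h₁ : ∀ a ∈ l₁, a ∈ s) (h₂ : ∀ b ∈ l₂, b ∈ s) :
    (l₂.map f).sum ≤ (l₁.map f).sum := by
  induction h with
  | nil => rfl
  | cons hab _ ih =>
    simp only [List.mem_cons, forall_eq_or_imp] at h₁ h₂
    simp only [List.map_cons, List.sum_cons]
    exact add_le_add (hf h₁.1 h₂.1 hab) (ih h₁.2 h₂.2)

lemma Finset.sum_map_sort {α β : Type*} [LinearOrder α] [AddCommMonoid β]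
    (s : Finset α) (f : α → β) : ((s.sort (· ≤ ·)).map f).sum = ∑ i ∈ s, f i := by
  rw [← sum_map_toList]
  exact ((sort_perm_toList s (· ≤ ·)).map f).sum_eq

theorem shiftGE.sum_le_sum {β : Type*} [AddCommMonoid β] [PartialOrder β]
    [IsOrderedAddMonoid β] {f : ℕ → β} {s : Set ℕ} (hf : AntitoneOn f s) {T S : Finset ℕ}
    (hT : ↑T ⊆ s) (hS : ↑S ⊆ s) (h : shiftGE T S) :
    ∑ i ∈ S, f i ≤ ∑ i ∈ T, f i := by
  rw [← sum_map_sort, ← sum_map_sort]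
  exact h.sum_map_le_sum_map_of_antitoneOn hf (fun a ha => hT ((mem_sort _).1 ha))
    (fun b hb => hS ((mem_sort _).1 hb))

theorem shiftGE.exists_le {T S : Finset ℕ} (h : shiftGE T S) {a : ℕ} (ha : a ∈ S) :
    ∃ b ∈ T, b ≤ a := by
  obtain ⟨i, rfl⟩ := List.mem_iff_get.1 ((mem_sort (· ≤ ·)).2 ha)
  have hi : i < (T.sort (· ≤ ·)).length := i.2.trans_eq h.length_eq.symm
  exact ⟨_, (mem_sort (· ≤ ·)).1 (List.get_mem _ _), h.get hi i.2⟩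

lemma sum_le_sum_of_card_eq_of_sdiff {ι M : Type*} [DecidableEq ι] [AddCommGroup M]
    [PartialOrder M] [IsOrderedAddMonoid M] {s t : Finset ι} {f : ι → M} (hst : #s = #t)
    (c : M) (hs : ∀ i ∈ s \ t, c ≤ f i) (ht : ∀ i ∈ t \ s, f i ≤ c) :
    ∑ i ∈ t, f i ≤ ∑ i ∈ s, f i := by
  have key : ∑ i ∈ t \ s, f i ≤ ∑ i ∈ s \ t, f i := calc
    _ ≤ #(t \ s) • c := sum_le_card_nsmul _ _ _ ht
    _ = #(s \ t) • c := by rw [card_sdiff_comm hst]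
    _ ≤ _ := card_nsmul_le_sum _ _ _ hs
  rw [← sub_nonneg, ← sum_sdiff_sub_sum_sdiff]
  exact sub_nonneg.2 key

lemma natCard_subset_card_eq_card_filter {α : Type*} (s : Finset α) (k : ℕ)
    (P : Finset α → Prop) [DecidablePred P] :
    Nat.card {T : Finset α // T ⊆ s ∧ T.card = k ∧ P T} = #{T ∈ s.powersetCard k | P T} := by
  rw [← Nat.card_eq_finsetCard]
  exact Nat.card_congr (Equiv.subtypeEquivRight fun T => by
    simp only [mem_filter, mem_powersetCard, and_assoc])

-- `#(nonnegKSets x k (Icc 1 n))` is the paper's `s_k(x)`.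
noncomputable def nonnegKSets (x : ℕ → ℝ) (k : ℕ) (s : Finset ℕ) : Finset (Finset ℕ) :=
  {T ∈ s.powersetCard k | 0 ≤ ∑ i ∈ T, x i}

lemma gMMS_le_card_nonnegKSets {m k : ℕ} {y : ℕ → ℝ} (hy : 0 ≤ ∑ i ∈ Icc 1 m, y i) :
    gMMS m k ≤ #(nonnegKSets y k (Icc 1 m)) := by
  refine Nat.sInf_le ⟨y, hy, ?_⟩
  rw [natCard_subset_card_eq_card_filter, nonnegKSets]

lemma card_nonnegKSets_comp (x : ℕ → ℝ) (k : ℕ) (s : Finset ℕ) (e : ℕ ↪ ℕ) :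
    #(nonnegKSets (x ∘ e) k s) = #(nonnegKSets x k (s.map e)) := by
  simp only [nonnegKSets, powersetCard_map, filter_map, card_map]
  exact congrArg card (filter_congr fun T _ => by simp [sum_map])

section Antitone

variable {n : ℕ} {x : ℕ → ℝ}

lemma add_sum_Icc_le_sum_of_one_mem (hx : AntitoneOn x ↑(Icc 1 n)) {k : ℕ} {T : Finset ℕ}
    (hT : T ⊆ Icc 1 n) (hTk : #T = k) (h1 : 1 ∈ T) :
    x 1 + ∑ i ∈ Icc (n - k + 2) n, x i ≤ ∑ i ∈ T, x i := by
  have hk : 1 ≤ k := hTk ▸ card_pos.2 ⟨1, h1⟩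
  have hkn : k ≤ n := by simpa [hTk] using card_le_card hT
  have h1' : 1 ∉ Icc (n - k + 2) n := by simp
  rw [← sum_insert h1']
  refine sum_le_sum_of_card_eq_of_sdiff ?_ (x (n - k + 1)) (fun i hi => ?_) (fun i hi => ?_)
  · rw [card_insert_of_notMem h1', Nat.card_Icc]
    omega
  · simp only [mem_sdiff, mem_insert, mem_Icc, not_or, not_and, not_le] at hi
    have := mem_Icc.1 (hT hi.1)
    exact hx (by simp; omega) (by simp; omega) (by omega)
  · simp only [mem_sdiff, mem_insert, mem_Icc] at hi
    rcases hi with ⟨rfl | hi, hiT⟩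
    · exact absurd h1 hiT
    · exact hx (by simp; omega) (by simp; omega) (by omega)

lemma choose_le_card_nonnegKSets (hx : AntitoneOn x ↑(Icc 1 n)) {k : ℕ} (hk : 1 ≤ k)
    (hkn : k ≤ n) (hsum : 0 ≤ ∑ i ∈ Icc 1 n, x i) (hmid : ∑ i ∈ Icc 2 (n - k + 1), x i < 0) :
    (n - 1).choose (k - 1) ≤ #(nonnegKSets x k (Icc 1 n)) := by
  have hsplit : Icc 1 n = insert 1 (Icc 2 (n - k + 1)) ∪ Icc (n - k + 2) n := by
    ext; simp only [mem_Icc, mem_insert, mem_union]; omega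
  rw [hsplit, sum_union (disjoint_left.2 (by simp; omega)), sum_insert (by simp)] at hsum
  have htail : 0 ≤ x 1 + ∑ i ∈ Icc (n - k + 2) n, x i := by linarith
  calc (n - 1).choose (k - 1) = #{T ∈ (Icc 1 n).powersetCard k | {1} ⊆ T} := by
        rw [card_filter_powersetCard_subset _ _ _ (by simp; omega) (by simpa using hk)]
        simp
    _ ≤ _ := card_le_card fun T hT => by
        simp only [mem_filter, mem_powersetCard, singleton_subset_iff] at hT
        exact mem_filter.2 ⟨mem_powersetCard.2 hT.1,
          htail.trans (add_sum_Icc_le_sum_of_one_mem hx hT.1.1 hT.1.2 hT.2)⟩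

open scoped Classical in
lemma card_shiftGE_le_card_nonnegKSets (hx : AntitoneOn x ↑(Icc 1 n)) {k : ℕ} {S : Finset ℕ}
    (hS : S ⊆ Icc 1 n) (h1 : 1 ∈ S) (hS0 : 0 ≤ ∑ i ∈ S, x i) :
    #{T ∈ (Icc 1 n).powersetCard k | shiftGE T S} ≤ #{T ∈ nonnegKSets x k (Icc 1 n) | 1 ∈ T} :=
  card_le_card fun T hT => by
    obtain ⟨hTk, hTS⟩ := mem_filter.1 hT
    have hT := (mem_powersetCard.1 hTk).1
    obtain ⟨b, hb, hb1⟩ := hTS.exists_le h1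
    have hb1 : b = 1 := le_antisymm hb1 (mem_Icc.1 (hT hb)).1
    exact mem_filter.2 ⟨mem_filter.2 ⟨hTk,
      hS0.trans (hTS.sum_le_sum hx (coe_subset.2 hT) (coe_subset.2 hS))⟩, hb1 ▸ hb⟩

end Antitone

lemma gMMS_le_card_nonnegKSets_of_not_one_mem {n k : ℕ} {x : ℕ → ℝ}
    (hmid : 0 ≤ ∑ i ∈ Icc 2 (n - k + 1), x i) :
    gMMS (n - k) k ≤ #{T ∈ nonnegKSets x k (Icc 1 n) | 1 ∉ T} := by
  have hshift : (Icc 1 (n - k)).map (addRightEmbedding 1) = Icc 2 (n - k + 1) :=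
    map_add_right_Icc _ _ _
  calc gMMS (n - k) k ≤ #(nonnegKSets (x ∘ addRightEmbedding 1) k (Icc 1 (n - k))) := by
        refine gMMS_le_card_nonnegKSets ?_
        rwa [← hshift, sum_map] at hmid
    _ = #(nonnegKSets x k (Icc 2 (n - k + 1))) := by rw [card_nonnegKSets_comp, hshift]
    _ ≤ _ := card_le_card fun T hT => by
        simp only [nonnegKSets, mem_filter, mem_powersetCard] at hT ⊢
        obtain ⟨⟨hTsub, hTk⟩, hTx⟩ := hT
        refine ⟨⟨⟨fun i hi => ?_, hTk⟩, hTx⟩, fun h => by simpa using hTsub h⟩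
        have := card_pos.2 ⟨i, hi⟩
        have := mem_Icc.1 (hTsub hi)
        exact mem_Icc.2 (by omega)

theorem stmt_15 (n k t : ℕ) (S : Finset ℕ)
    (hS : S ⊆ Finset.Icc 1 n) (hSc : S.card = k) (h1 : 1 ∈ S)
    (ht : t ≤ (n - 1).choose (k - 1))
    (hL : t ≤ Nat.card {T : Finset ℕ // T ⊆ Finset.Icc 1 n ∧ T.card = k ∧ shiftGE T S}
        + gMMS (n - k) k)
    (x : ℕ → ℝ) (hmono : ∀ i j, 1 ≤ i → i ≤ j → j ≤ n → x j ≤ x i)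
    (hsum : 0 ≤ ∑ i ∈ Finset.Icc 1 n, x i)
    (hbad : Nat.card {T : Finset ℕ // T ⊆ Finset.Icc 1 n ∧ T.card = k ∧
      0 ≤ ∑ i ∈ T, x i} < t) :
    ∑ i ∈ S, x i < 0 := by
  classical
  by_contra! hS0
  have hx : AntitoneOn x ↑(Icc 1 n) := fun i hi j hj hij =>
    hmono i j (mem_Icc.1 hi).1 hij (mem_Icc.1 hj).2
  have hk : 1 ≤ k := hSc ▸ card_pos.2 ⟨1, h1⟩
  have hkn : k ≤ n := by simpa [hSc] using card_le_card hS
  rw [natCard_subset_card_eq_card_filter] at hL hbad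
  change #(nonnegKSets x k (Icc 1 n)) < t at hbad
  have hmid : 0 ≤ ∑ i ∈ Icc 2 (n - k + 1), x i := by
    by_contra! hmid
    have := choose_le_card_nonnegKSets hx hk hkn hsum hmid
    omega
  have hL' := card_shiftGE_le_card_nonnegKSets hx (k := k) hS h1 hS0
  have hg := gMMS_le_card_nonnegKSets_of_not_one_mem (x := x) hmid
  have := card_filter_add_card_filter_not (s := nonnegKSets x k (Icc 1 n)) (1 ∈ ·)
  omega
end
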